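/- arXiv:2005.13908 — 4 statements merged into one kernel-verified Lean document; each statement's English description precedes it below -/
import Mathlib

section
/- Suppose X is a Markov random field on 𝒢 with strictly positive PMF p_X represented by clique potentials {ψ_C, C∈𝒞}, and suppose the functions g_i are such that for every clique C∈𝒞 and every y∈𝒴, ψ_C(x)=ψ_C(x′) for all x,x′∈g^{-1}(y). Then Y=(g_i(X_i), i∈V) is a Markov random field on 𝒢. -/
open scoped Classical

/-!
Basic framework: tuples of finitely-valued random variables indexed by the
vertex set `Fin N`, joint PMFs as real-valued functions, pushforward
distributions, Shannon entropy, conditional entropy, marginals, and Markov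
random fields on simple graphs.
-/

variable {N : ℕ}

/-- The distribution of the discrete random variable `f` when the underlying
configuration `x` is distributed according to the joint PMF `p`. -/
noncomputable def dist {𝒳 : Fin N → Type*} [∀ i, Fintype (𝒳 i)] {β : Type*}
    (p : (∀ i, 𝒳 i) → ℝ) (f : (∀ i, 𝒳 i) → β) : β → ℝ :=
  fun b => ∑ x : ∀ i, 𝒳 i, if f x = b then p x else 0

/-- Shannon entropy `H(f)` of the random variable `f` under the joint PMF `p`. -/
noncomputable def ent {𝒳 : Fin N → Type*} [∀ i, Fintype (𝒳 i)] {β : Type*} [Fintype β]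
    (p : (∀ i, 𝒳 i) → ℝ) (f : (∀ i, 𝒳 i) → β) : ℝ :=
  ∑ b : β, Real.negMulLog (dist p f b)

/-- Conditional Shannon entropy `H(f | h) := H(f, h) - H(h)`. -/
noncomputable def condEnt {𝒳 : Fin N → Type*} [∀ i, Fintype (𝒳 i)] {β γ : Type*}
    [Fintype β] [Fintype γ]
    (p : (∀ i, 𝒳 i) → ℝ) (f : (∀ i, 𝒳 i) → β) (h : (∀ i, 𝒳 i) → γ) : ℝ :=
  ent p (fun x => (f x, h x)) - ent p h

/-- Restriction of a configuration to the coordinates in `A` (i.e. `x_A`). -/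
def restr {𝒳 : Fin N → Type*} (A : Finset (Fin N)) (x : ∀ i, 𝒳 i) : ∀ i : A, 𝒳 i.1 :=
  fun i => x i.1

/-- The marginal PMF of the coordinates in `A`, evaluated at `x_A`. -/
noncomputable def margin {𝒳 : Fin N → Type*} [∀ i, Fintype (𝒳 i)]
    (p : (∀ i, 𝒳 i) → ℝ) (A : Finset (Fin N)) (x : ∀ i, 𝒳 i) : ℝ :=
  dist p (restr A) (restr A x)

/-- The neighbors `N_i` of vertex `i` in the graph `G`. -/
noncomputable def nbr (G : SimpleGraph (Fin N)) (i : Fin N) : Finset (Fin N) :=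
  Finset.univ.filter (fun j => G.Adj i j)

/-- `p` is (the joint PMF of) a Markov random field on `G`: for every vertex `i`,
the conditional PMF of `X_i` given `X_{V∖{i}}` equals the conditional PMF of `X_i`
given `X_{N_i}`, expressed in cross-multiplied form (conditional independence of
`X_i` and `X_{V∖({i}∪N_i)}` given `X_{N_i}`). -/
def IsMRF {𝒳 : Fin N → Type*} [∀ i, Fintype (𝒳 i)]
    (G : SimpleGraph (Fin N)) (p : (∀ i, 𝒳 i) → ℝ) : Prop :=
  ∀ (i : Fin N) (x : ∀ j, 𝒳 j),
    p x * margin p (nbr G i) x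
      = margin p (Finset.univ.erase i) x * margin p (insert i (nbr G i)) x

/-- Coordinate-wise application of the functions `g_i`: `g(x) = (g_i(x_i), i ∈ V)`. -/
def gmap {𝒳 𝒴 : Fin N → Type*} (g : ∀ i, 𝒳 i → 𝒴 i) (x : ∀ i, 𝒳 i) : ∀ i, 𝒴 i :=
  fun i => g i (x i)

/-- The set `𝒞` of cliques of `G`: subsets all of whose two-element subsets are
edges (this includes all singletons). -/
noncomputable def cliques (G : SimpleGraph (Fin N)) : Finset (Finset (Fin N)) :=
  Finset.univ.filter (fun C => G.IsClique (C : Set (Fin N)))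

/-- `ψ` (a potential defined on all of `𝒳`) depends only on the coordinates in `C`. -/
def localTo {𝒳 : Fin N → Type*} (C : Finset (Fin N)) (ψ : (∀ i, 𝒳 i) → ℝ) : Prop :=
  ∀ x x' : ∀ i, 𝒳 i, (∀ i ∈ C, x i = x' i) → ψ x = ψ x'

/-- The potential `ψ` depends on the coordinate `x_i` only via `y_i = g_i(x_i)`:
changing `x_i` within a preimage `g_i⁻¹(y_i)` does not change the value of `ψ`.
The negation of this is "`ψ` strictly depends on `x_i`". -/
def onlyVia {𝒳 𝒴 : Fin N → Type*} (g : ∀ i, 𝒳 i → 𝒴 i) (i : Fin N)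
    (ψ : (∀ j, 𝒳 j) → ℝ) : Prop :=
  ∀ (x : ∀ j, 𝒳 j) (xi' : 𝒳 i), g i xi' = g i (x i) →
    ψ (Function.update x i xi') = ψ x

/-! Each `ψ_C` is constant on the fibres of `g`, so `p_X` factors through `g` and, for a section
`s` of `g`, `p_Y(y) = p_X(s(y)) · ∏_j #g_j⁻¹(y_j)`. This is once more a product of potentials
living on cliques, and any such product satisfies the Markov identity at a vertex `i`: it splits
as `a · b` with `a` seeing only `{i} ∪ N_i` and `b` not seeing `i`, and exchanging `i`-th
coordinates matches the two sides of the cross-multiplied identity term by term. -/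

namespace localTo

variable {𝒳 : Fin N → Type*} {A B : Finset (Fin N)}

lemma mono {f : (∀ i, 𝒳 i) → ℝ} (hf : localTo A f) (hAB : A ⊆ B) : localTo B f :=
  fun x x' h => hf x x' fun i hi => h i (hAB hi)

lemma const_mul {f : (∀ i, 𝒳 i) → ℝ} (c : ℝ) (hf : localTo A f) :
    localTo A (fun x => c * f x) :=
  fun x x' h => congrArg (c * ·) (hf x x' h)

lemma prod {ι : Type*} (K : Finset ι) {f : ι → (∀ i, 𝒳 i) → ℝ}
    (hf : ∀ k ∈ K, localTo A (f k)) : localTo A (fun x => ∏ k ∈ K, f k x) :=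
  fun x x' h => Finset.prod_congr rfl fun k hk => hf k hk x x' h

end localTo

lemma subset_insert_nbr_of_isClique {G : SimpleGraph (Fin N)} {C : Finset (Fin N)} {i : Fin N}
    (hC : G.IsClique (C : Set (Fin N))) (hi : i ∈ C) : C ⊆ insert i (nbr G i) := by
  intro j hj
  rcases eq_or_ne i j with rfl | hij
  · exact Finset.mem_insert_self i _
  · exact Finset.mem_insert_of_mem (by simpa [nbr] using hC hi hj hij)

lemma update_apply_eq_of_mem_insert {𝒳 : Fin N → Type*} {y z : ∀ j, 𝒳 j} {i : Fin N}
    {A : Finset (Fin N)} (h : ∀ j ∈ A, y j = z j) :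
    ∀ j ∈ insert i A, Function.update y i (z i) j = z j := by
  intro j hj
  rcases eq_or_ne j i with rfl | hji
  · exact Function.update_self ..
  · rw [Function.update_of_ne hji]
    exact h j (Finset.mem_of_mem_insert_of_ne hj hji)

section Marginals

variable {𝒴 : Fin N → Type*} [∀ i, Fintype (𝒴 i)]

lemma margin_eq_sum_filter (q : (∀ i, 𝒴 i) → ℝ) (A : Finset (Fin N)) (y : ∀ i, 𝒴 i) :
    margin q A y = ∑ z with ∀ j ∈ A, z j = y j, q z := by
  rw [Finset.sum_filter]
  refine Finset.sum_congr rfl fun z _ => ?_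
  simp [restr, funext_iff]

lemma mul_margin_eq_margin_mul_margin_of_factor (q a b : (∀ i, 𝒴 i) → ℝ) {i : Fin N}
    {A : Finset (Fin N)} (hiA : i ∉ A) (hq : ∀ y, q y = a y * b y)
    (ha : localTo (insert i A) a) (hb : localTo (Finset.univ.erase i) b) (y : ∀ j, 𝒴 j) :
    q y * margin q A y = margin q (Finset.univ.erase i) y * margin q (insert i A) y := by
  have hne : ∀ j ∈ A, j ≠ i := fun j hj h => hiA (h ▸ hj)
  rw [margin_eq_sum_filter, margin_eq_sum_filter, margin_eq_sum_filter, Finset.mul_sum,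
    Finset.sum_mul_sum, ← Finset.sum_product']
  -- swap the `i`-th coordinates of `y` and `z`
  refine Finset.sum_nbij' (fun z => (Function.update y i (z i), Function.update z i (y i)))
    (fun uv => Function.update uv.2 i (uv.1 i)) ?_ ?_ ?_ ?_ ?_
  · intro z hz
    simp only [Finset.mem_filter, Finset.mem_product, Finset.mem_univ, true_and] at hz ⊢
    exact ⟨fun j hj => Function.update_of_ne (Finset.ne_of_mem_erase hj) _ _,
      update_apply_eq_of_mem_insert hz⟩
  · intro uv huv
    simp only [Finset.mem_filter, Finset.mem_product, Finset.mem_univ, true_and] at huv ⊢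
    intro j hj
    rw [Function.update_of_ne (hne j hj)]
    exact huv.2 j (Finset.mem_insert_of_mem hj)
  · intro z _
    simp
  · rintro ⟨u, v⟩ huv
    simp only [Finset.mem_filter, Finset.mem_product, Finset.mem_univ, true_and] at huv
    simp only [Function.update_self, Function.update_idem, Prod.mk.injEq]
    refine ⟨funext fun j => ?_, by rw [← huv.2 i (Finset.mem_insert_self i A),
      Function.update_eq_self]⟩
    rcases eq_or_ne j i with rfl | hji
    · exact Function.update_self ..
    · rw [Function.update_of_ne hji, huv.1 j (Finset.mem_erase.2 ⟨hji, Finset.mem_univ j⟩)]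
  · intro z hz
    simp only [Finset.mem_filter, Finset.mem_univ, true_and] at hz
    have hb_update : ∀ w t, b (Function.update w i t) = b w := fun w t =>
      hb _ _ fun j hj => Function.update_of_ne (Finset.ne_of_mem_erase hj) _ _
    rw [hq, hq, hq, hq, hb_update, hb_update,
      ha _ _ (update_apply_eq_of_mem_insert fun j hj => (hz j hj).symm),
      ha _ _ (update_apply_eq_of_mem_insert hz)]
    ring

end Marginals

theorem isMRF_of_eq_mul_prod_local {𝒴 : Fin N → Type*} [∀ i, Fintype (𝒴 i)] {ι : Type*}
    (G : SimpleGraph (Fin N)) (q : (∀ i, 𝒴 i) → ℝ) (K : Finset ι) (S : ι → Finset (Fin N))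
    (hS : ∀ k ∈ K, G.IsClique (S k : Set (Fin N))) (φ : ι → (∀ i, 𝒴 i) → ℝ)
    (hφ : ∀ k ∈ K, localTo (S k) (φ k)) (c : ℝ) (hq : ∀ y, q y = c * ∏ k ∈ K, φ k y) :
    IsMRF G q := by
  intro i
  refine mul_margin_eq_margin_mul_margin_of_factor q (fun y => ∏ k ∈ K with i ∈ S k, φ k y)
    (fun y => c * ∏ k ∈ K with i ∉ S k, φ k y) (by simp [nbr]) (fun y => ?_) ?_ ?_
  · rw [hq, ← Finset.prod_filter_mul_prod_filter_not K (fun k => i ∈ S k)]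
    ring
  · refine localTo.prod _ fun k hk => ?_
    obtain ⟨hkK, hik⟩ := Finset.mem_filter.mp hk
    exact (hφ k hkK).mono (subset_insert_nbr_of_isClique (hS k hkK) hik)
  · refine (localTo.prod _ fun k hk => ?_).const_mul c
    obtain ⟨hkK, hik⟩ := Finset.mem_filter.mp hk
    exact (hφ k hkK).mono fun j hj =>
      Finset.mem_erase.2 ⟨fun h => hik (h ▸ hj), Finset.mem_univ j⟩

section Pushforward

variable {𝒳 𝒴 : Fin N → Type*} [∀ i, Fintype (𝒳 i)]

lemma filter_gmap_eq_piFinset (g : ∀ i, 𝒳 i → 𝒴 i) (y : ∀ i, 𝒴 i) :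
    ({x | gmap g x = y} : Finset (∀ i, 𝒳 i)) = Fintype.piFinset fun j => {t | g j t = y j} := by
  ext x
  simp [gmap, funext_iff]

lemma dist_gmap_of_eq_comp (p : (∀ i, 𝒳 i) → ℝ) (g : ∀ i, 𝒳 i → 𝒴 i)
    (f : (∀ i, 𝒴 i) → ℝ) (hp : ∀ x, p x = f (gmap g x)) (y : ∀ i, 𝒴 i) :
    _root_.dist p (gmap g) y = f y * ∏ j, (({t | g j t = y j} : Finset (𝒳 j)).card : ℝ) := by
  have hfilter : _root_.dist p (gmap g) y = ∑ x with gmap g x = y, p x := by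
    -- the two `if`s carry different (classical) `Decidable` instances
    rw [Finset.sum_filter]
    exact Finset.sum_congr rfl fun x _ => by congr
  rw [hfilter, Finset.sum_congr rfl fun x hx =>
      (hp x).trans (congrArg f (Finset.mem_filter.1 hx).2),
    Finset.sum_const, filter_gmap_eq_piFinset, Fintype.card_piFinset, nsmul_eq_mul, mul_comm,
    Nat.cast_prod]

end Pushforward

theorem lumpable_of_const_on_preimages_general {𝒳 𝒴 : Fin N → Type*}
    [∀ i, Fintype (𝒳 i)] [∀ i, Fintype (𝒴 i)]
    (G : SimpleGraph (Fin N)) (p : (∀ i, 𝒳 i) → ℝ)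
    (ψ : Finset (Fin N) → (∀ i, 𝒳 i) → ℝ)
    (hloc : ∀ C ∈ cliques G, localTo C (ψ C))
    (hfac : ∀ x : ∀ i, 𝒳 i,
      p x = (∏ C ∈ cliques G, ψ C x) / ∑ x' : ∀ i, 𝒳 i, ∏ C ∈ cliques G, ψ C x')
    (g : ∀ i, 𝒳 i → 𝒴 i) (hsurj : ∀ i, Function.Surjective (g i))
    (hconst : ∀ C ∈ cliques G, ∀ x x' : ∀ i, 𝒳 i,
      gmap g x = gmap g x' → ψ C x = ψ C x') :
    IsMRF G (dist p (gmap g)) := by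
  set s : (∀ i, 𝒴 i) → ∀ i, 𝒳 i := fun y j => Function.surjInv (hsurj j) (y j)
  set Z := ∑ x', ∏ C ∈ cliques G, ψ C x'
  have hp : ∀ x, p x = Z⁻¹ * ∏ C ∈ cliques G, ψ C (s (gmap g x)) := by
    intro x
    rw [hfac, div_eq_inv_mul]
    congr 1
    exact Finset.prod_congr rfl fun C hC =>
      hconst C hC _ _ (funext fun j => (Function.surjInv_eq (hsurj j) _).symm)
  -- the fibre sizes `#g_j⁻¹(y_j)` enter as extra potentials on the singleton cliques `{j}`
  refine isMRF_of_eq_mul_prod_local G _ ((cliques G).disjSum Finset.univ) (Sum.elim id singleton)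
    ?_ (Sum.elim (fun C y => ψ C (s y)) fun j y => (({t | g j t = y j} : Finset (𝒳 j)).card : ℝ))
    ?_ Z⁻¹ fun y => ?_
  · rintro (C | j) hk
    · exact (Finset.mem_filter.1 (Finset.inl_mem_disjSum.1 hk)).2
    · simp
  · rintro (C | j) hk
    · exact fun y y' h =>
        hloc C (Finset.inl_mem_disjSum.1 hk) _ _ fun j hj => by simp [s, h j hj]
    · exact fun y y' h => by simp [h j (Finset.mem_singleton_self j)]
  · rw [dist_gmap_of_eq_comp p g (fun y => Z⁻¹ * ∏ C ∈ cliques G, ψ C (s y)) hp,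
      Finset.prod_disjSum]
    simp only [Sum.elim_inl, Sum.elim_inr]
    ring

/-- If the strictly positive PMF `p_X` of the MRF `X` on `𝒢` is
represented by clique potentials `{ψ_C, C ∈ 𝒞}` and every `ψ_C` is constant on
every preimage `g⁻¹(y)`, then `Y = (g_i(X_i), i ∈ V)` is a MRF on `𝒢`. -/
theorem lumpable_of_const_on_preimages {𝒳 𝒴 : Fin N → Type*}
    [∀ i, Fintype (𝒳 i)] [∀ i, Fintype (𝒴 i)]
    (G : SimpleGraph (Fin N)) (p : (∀ i, 𝒳 i) → ℝ)
    (hpos : ∀ x, 0 < p x) (hsum : ∑ x : ∀ i, 𝒳 i, p x = 1)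
    (ψ : Finset (Fin N) → (∀ i, 𝒳 i) → ℝ)
    (hloc : ∀ C ∈ cliques G, localTo C (ψ C))
    (hfac : ∀ x : ∀ i, 𝒳 i,
      p x = (∏ C ∈ cliques G, ψ C x) / ∑ x' : ∀ i, 𝒳 i, ∏ C ∈ cliques G, ψ C x')
    (g : ∀ i, 𝒳 i → 𝒴 i) (hsurj : ∀ i, Function.Surjective (g i))
    (hconst : ∀ C ∈ cliques G, ∀ x x' : ∀ i, 𝒳 i,
      gmap g x = gmap g x' → ψ C x = ψ C x') :
    IsMRF G (dist p (gmap g)) :=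
  lumpable_of_const_on_preimages_general G p ψ hloc hfac g hsurj hconst
end

section
/- Suppose X is a Markov random field on 𝒢 with strictly positive PMF p_X represented by clique potentials {ψ_C, C∈𝒞} such that for every vertex i∈V there is at most one clique C∈𝒞 whose potential ψ_C strictly depends on x_i. Then Y=(g_i(X_i), i∈V) is a Markov random field on 𝒢. -/
open scoped Classical

/-!
Basic framework: tuples of finitely-valued random variables indexed by the
vertex set `Fin N`, joint PMFs as real-valued functions, pushforward
distributions, Shannon entropy, conditional entropy, marginals, and Markov
random fields on simple graphs.
-/

variable {N : ℕ}

/-!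
Fix a vertex `i` and let `S` consist of `i` and the vertices `j` at which some potential of a
clique through `i` strictly depends. Split `∏_C ψ_C = Φ_in · Φ_out` into the cliques through `i`
and the others. `Φ_in` lives on `{i} ∪ N_i` and depends on `x_j` for `j ∉ S` only via `y_j`;
`Φ_out` ignores `x_i` and, because the only clique strictly depending on `x_j` (`j ∈ S`, `j ≠ i`)
passes through `i`, depends on `x_S` only via `y_S`. Hence the sum of `Φ_in · Φ_out` over the fibre
`g⁻¹(y)` factors into a sum over `x_S` times a sum over `x_{V∖S}`, the frozen coordinates being
set to a fixed preimage of `y`. The first factor depends on `y` only through `y_{{i} ∪ N_i}`, the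
second only through `y_{V∖{i}}`, and a law of the form `f(y_{{i} ∪ N_i}) · h(y_{V∖{i}})` is Markov
at `i`: marginalising either factor leaves the other untouched.
-/

open Finset

section PartialSum

variable {ι : Type*} [Fintype ι] [DecidableEq ι] {X : ι → Type*} [∀ j, Fintype (X j)]

noncomputable def partialSum (p : ι → Prop) [DecidablePred p] (P : ∀ j, X j → Prop)
    (Φ : (∀ j, X j) → ℝ) (s : ∀ j, X j) : ℝ :=
  ∑ a : (∀ j : Subtype p, X j),
    if ∀ j : Subtype p, P j (a j) then Φ (fun j => if h : p j then a ⟨j, h⟩ else s j) else 0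

theorem sum_ite_mul_eq_partialSum_mul_partialSum (p : ι → Prop) [DecidablePred p]
    (P : ∀ j, X j → Prop) (s : ∀ j, X j) {F₁ F₂ : (∀ j, X j) → ℝ}
    (h₁ : ∀ x, (∀ j, P j (x j)) → F₁ x = F₁ (fun j => if p j then x j else s j))
    (h₂ : ∀ x, (∀ j, P j (x j)) → F₂ x = F₂ (fun j => if p j then s j else x j)) :
    ∑ x, (if ∀ j, P j (x j) then F₁ x * F₂ x else 0)
      = partialSum p P F₁ s * partialSum (fun j => ¬ p j) P F₂ s := by
  rw [partialSum, partialSum, Finset.sum_mul_sum, ← Fintype.sum_prod_type',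
    ← (Equiv.piEquivPiSubtypeProd p X).symm.sum_comp]
  refine Fintype.sum_congr _ _ fun ⟨a, b⟩ => ?_
  set x := (Equiv.piEquivPiSubtypeProd p X).symm (a, b) with hx
  have hbox : (∀ j, P j (x j)) ↔
      (∀ j : Subtype p, P j (a j)) ∧ ∀ j : {j // ¬ p j}, P j (b j) := by
    refine ⟨fun h => ⟨fun j => ?_, fun j => ?_⟩, fun ⟨ha, hb⟩ j => ?_⟩
    · simpa [hx, j.2] using h j
    · simpa [hx, j.2] using h j
    · by_cases hj : p j
      · simpa [hx, hj] using ha ⟨j, hj⟩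
      · simpa [hx, hj] using hb ⟨j, hj⟩
  by_cases hab : (∀ j : Subtype p, P j (a j)) ∧ ∀ j : {j // ¬ p j}, P j (b j)
  · rw [if_pos (hbox.2 hab), if_pos hab.1, if_pos hab.2, h₁ x (hbox.2 hab), h₂ x (hbox.2 hab)]
    congr 2 <;> funext j <;> by_cases hj : p j <;> simp [hx, hj]
  · rw [if_neg (mt hbox.1 hab)]
    rcases not_and_or.1 hab with ha | hb
    · rw [if_neg ha, zero_mul]
    · rw [if_neg hb, mul_zero]

theorem partialSum_congr {p : ι → Prop} [DecidablePred p] {P P' : ∀ j, X j → Prop}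
    (h : ∀ j, p j → ∀ t, (P j t ↔ P' j t)) (Φ : (∀ j, X j) → ℝ) (s : ∀ j, X j) :
    partialSum p P Φ s = partialSum p P' Φ s :=
  Fintype.sum_congr _ _ fun a => by
    simp only [fun j : Subtype p => h j j.2 (a j)]

theorem partialSum_eq_apply {p : ι → Prop} [DecidablePred p] {P : ∀ j, X j → Prop}
    {s : ∀ j, X j} (h : ∀ j, p j → ∀ t, (P j t ↔ t = s j)) (Φ : (∀ j, X j) → ℝ) :
    partialSum p P Φ s = Φ s := by
  have hP : ∀ a : (∀ j : Subtype p, X j),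
      (∀ j : Subtype p, P j (a j)) ↔ a = fun j : Subtype p => s j := fun a => by
    simp only [fun j : Subtype p => h j j.2 (a j), funext_iff]
  simp only [partialSum, hP, Fintype.sum_ite_eq']
  congr 1
  funext j
  split_ifs <;> rfl

end PartialSum

section Margin

variable {𝒴 : Fin N → Type*} [∀ i, Fintype (𝒴 i)]

theorem margin_eq_sum_ite (q : (∀ i, 𝒴 i) → ℝ) (T : Finset (Fin N)) (y : ∀ i, 𝒴 i) :
    margin q T y = ∑ u, if ∀ j, j ∈ T → u j = y j then q u else 0 :=
  Fintype.sum_congr _ _ fun u => by simp only [restr, funext_iff, Subtype.forall]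

theorem mul_margin_inter_eq_margin_mul_margin {A B : Finset (Fin N)}
    (hAB : ∀ j, j ∈ A ∨ j ∈ B) {q f h : (∀ i, 𝒴 i) → ℝ} (hq : ∀ y, q y = f y * h y)
    (hf : localTo A f) (hh : localTo B h) (y : ∀ i, 𝒴 i) :
    q y * margin q (A ∩ B) y = margin q B y * margin q A y := by
  have split : ∀ T, A ∩ B ⊆ T → margin q T y
      = partialSum (· ∈ B) (fun j t => j ∈ T → t = y j) h y
        * partialSum (· ∉ B) (fun j t => j ∈ T → t = y j) f y := by
    intro T hT
    rw [margin_eq_sum_ite]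
    simp_rw [hq, mul_comm (f _)]
    have hf' : ∀ x, (∀ j, j ∈ T → x j = y j) →
        f x = f (fun j => if j ∈ B then y j else x j) := fun x hx => hf _ _ fun j hj => by
      split_ifs with hjB
      exacts [hx j (hT (mem_inter.2 ⟨hj, hjB⟩)), rfl]
    convert sum_ite_mul_eq_partialSum_mul_partialSum (· ∈ B) (fun j t => j ∈ T → t = y j) y
      (fun x _ => hh _ _ fun j hj => by simp [hj]) hf' using 2
    -- the two `if`s differ only in their `Decidable` instances
    congr 1
  have hB₁ : partialSum (· ∈ B) (fun j t => j ∈ B → t = y j) h y = h y :=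
    partialSum_eq_apply (fun j hj t => by simp [hj]) h
  have hB₂ : partialSum (· ∉ B) (fun j t => j ∈ B → t = y j) f y
      = partialSum (· ∉ B) (fun j t => j ∈ A ∩ B → t = y j) f y :=
    partialSum_congr (fun j hj t => by simp [hj]) f y
  have hA₁ : partialSum (· ∉ B) (fun j t => j ∈ A → t = y j) f y = f y :=
    partialSum_eq_apply (fun j hj t => by simp [(hAB j).resolve_right hj]) f
  have hA₂ : partialSum (· ∈ B) (fun j t => j ∈ A → t = y j) h y
      = partialSum (· ∈ B) (fun j t => j ∈ A ∩ B → t = y j) h y :=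
    partialSum_congr (fun j hj t => by simp [hj]) h y
  rw [split _ subset_rfl, split _ inter_subset_right, split _ inter_subset_left,
    hB₁, hB₂, hA₁, hA₂, hq]
  ring

theorem isMRF_of_forall_factorization (G : SimpleGraph (Fin N)) (q : (∀ i, 𝒴 i) → ℝ)
    (hfac : ∀ i, ∃ f h : (∀ j, 𝒴 j) → ℝ, (∀ y, q y = f y * h y) ∧
      localTo (insert i (nbr G i)) f ∧ localTo (univ.erase i) h) :
    IsMRF G q := by
  intro i y
  obtain ⟨f, h, hq, hf, hh⟩ := hfac i
  have hnbr : insert i (nbr G i) ∩ univ.erase i = nbr G i := by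
    ext j
    by_cases hji : j = i <;> simp [nbr, hji]
  have hcover : ∀ j, j ∈ insert i (nbr G i) ∨ j ∈ univ.erase i := fun j => by
    by_cases hji : j = i <;> simp [hji]
  simpa only [hnbr] using mul_margin_inter_eq_margin_mul_margin hcover hq hf hh y

end Margin

section Locality

variable {𝒳 𝒴 : Fin N → Type*} {g : ∀ i, 𝒳 i → 𝒴 i}

theorem localTo_mono {A B : Finset (Fin N)} (hAB : A ⊆ B) {φ : (∀ i, 𝒳 i) → ℝ}
    (hφ : localTo A φ) : localTo B φ :=
  fun x x' hx => hφ x x' fun j hj => hx j (hAB hj)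

theorem localTo_prod {ι : Type*} {s : Finset ι} {A : Finset (Fin N)}
    {φ : ι → (∀ i, 𝒳 i) → ℝ} (h : ∀ c ∈ s, localTo A (φ c)) :
    localTo A (fun x => ∏ c ∈ s, φ c x) :=
  fun x x' hx => prod_congr rfl fun c hc => h c hc x x' hx

theorem onlyVia_prod {ι : Type*} {s : Finset ι} {j : Fin N} {φ : ι → (∀ i, 𝒳 i) → ℝ}
    (h : ∀ c ∈ s, onlyVia g j (φ c)) : onlyVia g j (fun x => ∏ c ∈ s, φ c x) :=
  fun x t ht => prod_congr rfl fun c hc => h c hc x t ht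

theorem onlyVia_of_localTo_of_notMem {C : Finset (Fin N)} {φ : (∀ i, 𝒳 i) → ℝ}
    (hφ : localTo C φ) {j : Fin N} (hj : j ∉ C) : onlyVia g j φ :=
  fun _ _ _ => hφ _ _ fun _ hk => Function.update_of_ne (ne_of_mem_of_not_mem hk hj) _ _

theorem eq_of_onlyVia {φ : (∀ i, 𝒳 i) → ℝ} {U : Finset (Fin N)}
    (hU : ∀ j ∈ U, onlyVia g j φ) {x x' : ∀ i, 𝒳 i} (hout : ∀ j ∉ U, x j = x' j)
    (hg : ∀ j ∈ U, g j (x j) = g j (x' j)) : φ x = φ x' := by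
  induction U using Finset.induction_on generalizing x with
  | empty => rw [funext fun j => hout j (notMem_empty j)]
  | insert a U ha ih =>
    rw [← hU a (mem_insert_self a U) x (x' a) (hg a (mem_insert_self a U)).symm]
    refine ih (fun j hj => hU j (mem_insert_of_mem hj)) (fun j hj => ?_) (fun j hj => ?_)
    · by_cases hja : j = a
      · subst hja; simp
      · simp [hja, hout j (by simp [hja, hj])]
    · simp [ne_of_mem_of_not_mem hj ha, hg j (mem_insert_of_mem hj)]

end Locality

section FiberSum

variable {𝒳 𝒴 : Fin N → Type*} [∀ i, Fintype (𝒳 i)] {g : ∀ i, 𝒳 i → 𝒴 i}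

noncomputable def fiberSum (g : ∀ i, 𝒳 i → 𝒴 i) (sec : ∀ i, 𝒴 i → 𝒳 i) (p : Fin N → Prop)
    [DecidablePred p] (Φ : (∀ i, 𝒳 i) → ℝ) (y : ∀ i, 𝒴 i) : ℝ :=
  partialSum p (fun j t => g j t = y j) Φ (fun j => sec j (y j))

theorem localTo_fiberSum (sec : ∀ i, 𝒴 i → 𝒳 i) {p : Fin N → Prop} [DecidablePred p]
    {A : Finset (Fin N)} (hpA : ∀ j, p j → j ∈ A) {Φ : (∀ i, 𝒳 i) → ℝ} (hΦ : localTo A Φ) :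
    localTo A (fiberSum g sec p Φ) := by
  intro y y' hy
  refine Fintype.sum_congr _ _ fun a => ?_
  simp only [fun j : Subtype p => hy j (hpA j j.2)]
  congr 1
  exact hΦ _ _ fun j hj => by split_ifs <;> simp [hy j hj]

theorem dist_gmap_eq_fiberSum_mul_fiberSum {sec : ∀ i, 𝒴 i → 𝒳 i}
    (hsec : ∀ i, Function.RightInverse (sec i) (g i)) (S : Finset (Fin N))
    {q Φ₁ Φ₂ : (∀ i, 𝒳 i) → ℝ} (hq : ∀ x, q x = Φ₁ x * Φ₂ x)
    (h₁ : ∀ j ∉ S, onlyVia g j Φ₁) (h₂ : ∀ j ∈ S, onlyVia g j Φ₂) (y : ∀ i, 𝒴 i) :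
    dist q (gmap g) y = fiberSum g sec (· ∈ S) Φ₁ y * fiberSum g sec (· ∉ S) Φ₂ y := by
  have hfib : ∀ x, gmap g x = y ↔ ∀ j, g j (x j) = y j := fun x => funext_iff
  have hΦ₁ : ∀ x, (∀ j, g j (x j) = y j) →
      Φ₁ x = Φ₁ (fun j => if j ∈ S then x j else sec j (y j)) := fun x hx =>
    eq_of_onlyVia (fun j hj => h₁ j (mem_compl.1 hj)) (fun j hj => by simp [notMem_compl.1 hj])
      fun j hj => by simp [mem_compl.1 hj, hsec j (y j), hx j]
  have hΦ₂ : ∀ x, (∀ j, g j (x j) = y j) →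
      Φ₂ x = Φ₂ (fun j => if j ∈ S then sec j (y j) else x j) := fun x hx =>
    eq_of_onlyVia h₂ (fun j hj => by simp [hj]) fun j hj => by simp [hj, hsec j (y j), hx j]
  unfold _root_.dist fiberSum
  simp_rw [hfib, hq]
  convert sum_ite_mul_eq_partialSum_mul_partialSum (· ∈ S) (fun j t => g j t = y j)
    (fun j => sec j (y j)) hΦ₁ hΦ₂ using 2
  congr 1

end FiberSum

section Gibbs

variable {𝒳 𝒴 : Fin N → Type*} {G : SimpleGraph (Fin N)}
  {ψ : Finset (Fin N) → (∀ i, 𝒳 i) → ℝ} {g : ∀ i, 𝒳 i → 𝒴 i} {i : Fin N}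

variable (G ψ g i) in
noncomputable def strictDepSet : Finset (Fin N) :=
  insert i (univ.filter fun j => ∃ C ∈ cliques G, i ∈ C ∧ ¬ onlyVia g j (ψ C))

theorem subset_insert_nbr_of_mem_cliques {C : Finset (Fin N)} (hC : C ∈ cliques G)
    (hi : i ∈ C) : C ⊆ insert i (nbr G i) := by
  intro j hj
  by_cases hji : j = i
  · simp [hji]
  · exact mem_insert_of_mem (mem_filter.2 ⟨mem_univ j, (mem_filter.1 hC).2 hi hj (Ne.symm hji)⟩)

theorem strictDepSet_subset (hloc : ∀ C ∈ cliques G, localTo C (ψ C)) :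
    strictDepSet G ψ g i ⊆ insert i (nbr G i) := by
  intro j hj
  rcases mem_insert.1 hj with rfl | hj
  · exact mem_insert_self j _
  · obtain ⟨C, hC, hiC, hdep⟩ := (mem_filter.1 hj).2
    refine subset_insert_nbr_of_mem_cliques hC hiC ?_
    by_contra hjC
    exact hdep (onlyVia_of_localTo_of_notMem (hloc C hC) hjC)

theorem localTo_prod_cliques_mem (hloc : ∀ C ∈ cliques G, localTo C (ψ C)) :
    localTo (insert i (nbr G i)) (fun x => ∏ C ∈ (cliques G).filter (i ∈ ·), ψ C x) :=
  localTo_prod fun C hC =>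
    localTo_mono (subset_insert_nbr_of_mem_cliques (mem_filter.1 hC).1 (mem_filter.1 hC).2)
      (hloc C (mem_filter.1 hC).1)

theorem localTo_prod_cliques_notMem (hloc : ∀ C ∈ cliques G, localTo C (ψ C)) :
    localTo (univ.erase i) (fun x => ∏ C ∈ (cliques G).filter (i ∉ ·), ψ C x) :=
  localTo_prod fun C hC =>
    localTo_mono (fun j hj => mem_erase.2 ⟨ne_of_mem_of_not_mem hj (mem_filter.1 hC).2, mem_univ j⟩)
      (hloc C (mem_filter.1 hC).1)

theorem onlyVia_prod_cliques_mem {j : Fin N} (hj : j ∉ strictDepSet G ψ g i) :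
    onlyVia g j (fun x => ∏ C ∈ (cliques G).filter (i ∈ ·), ψ C x) :=
  onlyVia_prod fun C hC => by
    by_contra hdep
    exact hj (mem_insert_of_mem
      (mem_filter.2 ⟨mem_univ j, C, (mem_filter.1 hC).1, (mem_filter.1 hC).2, hdep⟩))

theorem onlyVia_prod_cliques_notMem (hloc : ∀ C ∈ cliques G, localTo C (ψ C)) {j : Fin N}
    (hone : ∀ C₁ ∈ cliques G, ∀ C₂ ∈ cliques G,
      ¬ onlyVia g j (ψ C₁) → ¬ onlyVia g j (ψ C₂) → C₁ = C₂)
    (hj : j ∈ strictDepSet G ψ g i) :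
    onlyVia g j (fun x => ∏ C ∈ (cliques G).filter (i ∉ ·), ψ C x) := by
  refine onlyVia_prod fun C hCi => ?_
  obtain ⟨hC, hiC⟩ := mem_filter.1 hCi
  rcases mem_insert.1 hj with rfl | hj
  · exact onlyVia_of_localTo_of_notMem (hloc C hC) hiC
  · obtain ⟨C₀, hC₀, hiC₀, hdep₀⟩ := (mem_filter.1 hj).2
    by_contra hdep
    exact hiC (hone C₀ hC₀ C hC hdep₀ hdep ▸ hiC₀)

end Gibbs

theorem lumpable_of_atMostOne_strictDep_general {𝒳 𝒴 : Fin N → Type*}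
    [∀ i, Fintype (𝒳 i)] [∀ i, Fintype (𝒴 i)]
    (G : SimpleGraph (Fin N)) (p : (∀ i, 𝒳 i) → ℝ)
    (ψ : Finset (Fin N) → (∀ i, 𝒳 i) → ℝ)
    (hloc : ∀ C ∈ cliques G, localTo C (ψ C))
    (hfac : ∀ x : ∀ i, 𝒳 i,
      p x = (∏ C ∈ cliques G, ψ C x) / ∑ x' : ∀ i, 𝒳 i, ∏ C ∈ cliques G, ψ C x')
    (g : ∀ i, 𝒳 i → 𝒴 i) (hsurj : ∀ i, Function.Surjective (g i))
    (hone : ∀ i : Fin N, ∀ C₁ ∈ cliques G, ∀ C₂ ∈ cliques G,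
      ¬ onlyVia g i (ψ C₁) → ¬ onlyVia g i (ψ C₂) → C₁ = C₂) :
    IsMRF G (dist p (gmap g)) := by
  refine isMRF_of_forall_factorization G _ fun i => ?_
  set S := strictDepSet G ψ g i
  set Z := ∑ x', ∏ C ∈ cliques G, ψ C x'
  set sec := fun j => Function.surjInv (hsurj j)
  set Φin := fun x => ∏ C ∈ (cliques G).filter (i ∈ ·), ψ C x
  set Φout := fun x => (∏ C ∈ (cliques G).filter (i ∉ ·), ψ C x) / Z
  have hsplit : ∀ x, p x = Φin x * Φout x := fun x => by
    rw [hfac, ← prod_filter_mul_prod_filter_not (cliques G) (i ∈ ·), mul_div_assoc]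
  have hout_via : ∀ j ∈ S, onlyVia g j Φout := fun j hj x t ht =>
    congrArg (· / Z) (onlyVia_prod_cliques_notMem hloc (hone j) hj x t ht)
  have hout_loc : localTo (univ.erase i) Φout := fun x x' hx =>
    congrArg (· / Z) (localTo_prod_cliques_notMem hloc x x' hx)
  have hSc : ∀ j, j ∉ S → j ∈ univ.erase i := fun j hj =>
    mem_erase.2 ⟨fun hji => hj (hji ▸ mem_insert_self i _), mem_univ j⟩
  exact ⟨_, _,
    dist_gmap_eq_fiberSum_mul_fiberSum (fun j => Function.rightInverse_surjInv (hsurj j)) S hsplit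
      (fun _ hj => onlyVia_prod_cliques_mem hj) hout_via,
    localTo_fiberSum sec (fun _ hj => strictDepSet_subset hloc hj) (localTo_prod_cliques_mem hloc),
    localTo_fiberSum sec hSc hout_loc⟩

/-- **Proposition 1.** If the strictly positive PMF `p_X` of the MRF
`X` on `𝒢` is represented by clique potentials `{ψ_C, C ∈ 𝒞}` such that for every
vertex `i` there is at most one clique whose potential strictly depends on `x_i`,
then `Y = (g_i(X_i), i ∈ V)` is a MRF on `𝒢`. -/
theorem lumpable_of_atMostOne_strictDep {𝒳 𝒴 : Fin N → Type*}
    [∀ i, Fintype (𝒳 i)] [∀ i, Fintype (𝒴 i)]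
    (G : SimpleGraph (Fin N)) (p : (∀ i, 𝒳 i) → ℝ)
    (hpos : ∀ x, 0 < p x) (hsum : ∑ x : ∀ i, 𝒳 i, p x = 1)
    (ψ : Finset (Fin N) → (∀ i, 𝒳 i) → ℝ)
    (hloc : ∀ C ∈ cliques G, localTo C (ψ C))
    (hfac : ∀ x : ∀ i, 𝒳 i,
      p x = (∏ C ∈ cliques G, ψ C x) / ∑ x' : ∀ i, 𝒳 i, ∏ C ∈ cliques G, ψ C x')
    (g : ∀ i, 𝒳 i → 𝒴 i) (hsurj : ∀ i, Function.Surjective (g i))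
    (hone : ∀ i : Fin N, ∀ C₁ ∈ cliques G, ∀ C₂ ∈ cliques G,
      ¬ onlyVia g i (ψ C₁) → ¬ onlyVia g i (ψ C₂) → C₁ = C₂) :
    IsMRF G (dist p (gmap g)) :=
  lumpable_of_atMostOne_strictDep_general G p ψ hloc hfac g hsurj hone
end

section
/- Let X be a Markov random field on 𝒢=(V,E) and let Y_i=g_i(X_i) for each i∈V. If for every vertex i∈V the conditional entropies satisfy H(Y_i | Y_{N_i}) = H(Y_i | X_{N_i}), then Y=(Y_i, i∈V) is a Markov random field on 𝒢. -/
open scoped Classical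

/-!
Basic framework: tuples of finitely-valued random variables indexed by the
vertex set `Fin N`, joint PMFs as real-valued functions, pushforward
distributions, Shannon entropy, conditional entropy, marginals, and Markov
random fields on simple graphs.
-/

variable {N : ℕ}

/-!
Fix a vertex `i` and write `A = N_i`, `E = V ∖ {i}`. The Markov property at `i` says that
`X_i` and `X_E` are conditionally independent given `X_A`, and by Gibbs' inequality this is
equivalent to the vanishing of the conditional mutual information `I(X_i ; X_E | X_A)`,
i.e. to `H(X_i | X_A, X_E) = H(X_i | X_A)`. Conditional independence survives applying `g_i`
to `X_i`, and conditioning on a function of a variable can only increase entropy, so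
`H(Y_i | Y_A) = H(Y_i | X_A) = H(Y_i | X_E) ≤ H(Y_i | Y_E) ≤ H(Y_i | Y_A)`.
Hence `H(Y_i | Y_A, Y_E) = H(Y_i | Y_A)`, which is the Markov property of `Y` at `i`.
-/

namespace DiscreteLaw

open Finset Real InformationTheory

section Restriction

variable {𝒳 : Fin N → Type*}

theorem restr_eq_restr_iff {A : Finset (Fin N)} {x x' : ∀ i, 𝒳 i} :
    restr A x' = restr A x ↔ ∀ j ∈ A, x' j = x j :=
  ⟨fun h j hj => congrFun h ⟨j, hj⟩, fun h => funext fun j => h j j.2⟩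

theorem restr_update_of_notMem {A : Finset (Fin N)} {i : Fin N} (hi : i ∉ A)
    (x : ∀ i, 𝒳 i) (a : 𝒳 i) : restr A (Function.update x i a) = restr A x :=
  funext fun j => Function.update_of_ne (ne_of_mem_of_not_mem j.2 hi) a x

theorem nbr_subset_erase (G : SimpleGraph (Fin N)) (i : Fin N) : nbr G i ⊆ univ.erase i :=
  fun j hj => mem_erase.mpr ⟨(mem_filter.mp hj).2.ne', mem_univ j⟩

end Restriction

theorem sub_le_mul_log_div {J R : ℝ} (hJ : 0 ≤ J) (hR : 0 < R) :
    J - R ≤ J * log (J / R) ∧ (J - R = J * log (J / R) ↔ J = R) := by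
  have hkl : J * log (J / R) - (J - R) = R * klFun (J / R) := by
    rw [klFun_apply]
    field_simp
    ring
  have hJR : 0 ≤ J / R := div_nonneg hJ hR.le
  refine ⟨sub_nonneg.mp (hkl ▸ mul_nonneg hR.le (klFun_nonneg hJR)), ?_⟩
  rw [← sub_eq_zero, ← neg_eq_zero, neg_sub, hkl, mul_eq_zero, or_iff_right hR.ne',
    klFun_eq_zero_iff hJR, div_eq_one_iff_eq hR.ne']

theorem sub_mul_div_le_mul_log {J U V M : ℝ} (hJ : 0 ≤ J) (hJU : J ≤ U) (hJV : J ≤ V)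
    (hUM : U ≤ M) :
    J - U * V / M ≤ J * (log J - log U - log V + log M) ∧
      (J - U * V / M = J * (log J - log U - log V + log M) ↔ J * M = U * V) := by
  rcases hJ.eq_or_lt with rfl | hJ
  · have hM : 0 ≤ M := hJU.trans hUM
    simp only [zero_sub, zero_mul, neg_nonpos, neg_eq_zero, div_eq_zero_iff]
    refine ⟨div_nonneg (mul_nonneg hJU hJV) hM, (or_iff_left_of_imp fun hM0 => ?_).trans eq_comm⟩
    rw [le_antisymm (hM0 ▸ hUM) hJU, zero_mul]
  · have hU := hJ.trans_le hJU
    have hV := hJ.trans_le hJV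
    have hM := hU.trans_le hUM
    have hlog : log J - log U - log V + log M = log (J / (U * V / M)) := by
      rw [log_div hJ.ne' (by positivity), log_div (by positivity) hM.ne',
        log_mul hU.ne' hV.ne']
      ring
    obtain ⟨hle, heq⟩ := sub_le_mul_log_div hJ.le (show 0 < U * V / M by positivity)
    rw [hlog, ← eq_div_iff hM.ne']
    exact ⟨hle, heq⟩

variable {𝒳 : Fin N → Type*} [∀ i, Fintype (𝒳 i)] {p : (∀ i, 𝒳 i) → ℝ} {β γ δ ε : Type*}

section Law

theorem dist_congr {F : (∀ i, 𝒳 i) → β} {G : (∀ i, 𝒳 i) → γ} {b : β} {c : γ}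
    (h : ∀ x, F x = b ↔ G x = c) : dist p F b = dist p G c :=
  sum_congr rfl fun x _ => if_congr (h x) rfl rfl

theorem dist_nonneg (hp : ∀ x, 0 ≤ p x) (F : (∀ i, 𝒳 i) → β) (b : β) : 0 ≤ dist p F b :=
  sum_nonneg fun x _ => by split_ifs <;> simp [hp x]

theorem dist_mono (hp : ∀ x, 0 ≤ p x) {F : (∀ i, 𝒳 i) → β} {G : (∀ i, 𝒳 i) → γ}
    {b : β} {c : γ} (h : ∀ x, F x = b → G x = c) : dist p F b ≤ dist p G c :=
  sum_le_sum fun x _ => by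
    by_cases hx : F x = b
    · simp [hx, h x hx]
    · rw [if_neg hx]
      split_ifs <;> simp [hp x]

theorem dist_eq_zero_of_forall_ne {F : (∀ i, 𝒳 i) → β} {b : β} (h : ∀ x, F x ≠ b) :
    dist p F b = 0 :=
  sum_eq_zero fun x _ => if_neg (h x)

theorem dist_apply_of_injective {F : (∀ i, 𝒳 i) → β} (hF : Function.Injective F)
    (x : ∀ i, 𝒳 i) : dist p F (F x) = p x := by
  simp [_root_.dist, hF.eq_iff]

theorem sum_dist_mul [Fintype β] (F : (∀ i, 𝒳 i) → β) (G : β → ℝ) :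
    ∑ b, dist p F b * G b = ∑ x, p x * G (F x) := by
  simp only [_root_.dist, sum_mul, ite_mul, zero_mul]
  rw [sum_comm]
  simp

theorem sum_dist [Fintype β] (F : (∀ i, 𝒳 i) → β) : ∑ b, dist p F b = ∑ x, p x := by
  simpa using sum_dist_mul (p := p) F fun _ => 1

theorem sum_dist_pair_left [Fintype β] (f : (∀ i, 𝒳 i) → β) (h : (∀ i, 𝒳 i) → γ) (c : γ) :
    ∑ a, dist p (fun x => (f x, h x)) (a, c) = dist p h c := by
  simp only [_root_.dist]
  rw [sum_comm]
  simp [Prod.ext_iff, ite_and]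

theorem sum_dist_pair_right [Fintype δ] (h : (∀ i, 𝒳 i) → γ) (k : (∀ i, 𝒳 i) → δ) (c : γ) :
    ∑ d, dist p (fun x => (h x, k x)) (c, d) = dist p h c := by
  simp only [_root_.dist]
  rw [sum_comm]
  simp [Prod.ext_iff, ite_and]

theorem dist_map_fst [Fintype β] (φ : β → γ) (f : (∀ i, 𝒳 i) → β) (r : (∀ i, 𝒳 i) → δ)
    (a' : γ) (c : δ) :
    dist p (fun x => (φ (f x), r x)) (a', c)
      = ∑ a, if φ a = a' then dist p (fun x => (f x, r x)) (a, c) else 0 := by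
  simp only [_root_.dist, ← sum_filter]
  rw [sum_comm]
  refine sum_congr rfl fun x _ => ?_
  simp [Prod.ext_iff, ite_and]

theorem dist_dist {𝒴 : Fin N → Type*} [∀ i, Fintype (𝒴 i)] (F : (∀ i, 𝒳 i) → ∀ i, 𝒴 i)
    (G : (∀ i, 𝒴 i) → β) (b : β) : dist (dist p F) G b = dist p (fun x => G (F x)) b := by
  have h := sum_dist_mul (p := p) F fun y => if G y = b then 1 else 0
  simp only [mul_ite, mul_one, mul_zero] at h
  exact h

theorem ent_eq_sum [Fintype β] (F : (∀ i, 𝒳 i) → β) :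
    ent p F = -∑ x, p x * log (dist p F (F x)) := by
  simp only [ent, negMulLog, neg_mul, sum_neg_distrib, sum_dist_mul]

/-- `f` and `k` are conditionally independent given `h`. -/
def CondIndep (p : (∀ i, 𝒳 i) → ℝ) (f : (∀ i, 𝒳 i) → β) (h : (∀ i, 𝒳 i) → γ)
    (k : (∀ i, 𝒳 i) → δ) : Prop :=
  ∀ a c d, dist p (fun x => (f x, h x, k x)) (a, c, d) * dist p h c
    = dist p (fun x => (f x, h x)) (a, c) * dist p (fun x => (h x, k x)) (c, d)

end Law

section Entropy

variable [Fintype β] [Fintype γ] [Fintype δ]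

theorem ent_congr {F : (∀ i, 𝒳 i) → β} {G : (∀ i, 𝒳 i) → γ}
    (h : ∀ x x', F x' = F x ↔ G x' = G x) : ent p F = ent p G := by
  simp only [ent_eq_sum, dist_congr (h _)]

theorem condEnt_congr_right (f : (∀ i, 𝒳 i) → β) {h : (∀ i, 𝒳 i) → γ}
    {h' : (∀ i, 𝒳 i) → δ} (hh : ∀ x x', h x' = h x ↔ h' x' = h' x) :
    condEnt p f h = condEnt p f h' := by
  unfold condEnt
  rw [ent_congr hh,
    ent_congr (G := fun x => (f x, h' x)) fun x x' => by simp only [Prod.ext_iff, hh x x']]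

theorem condEnt_pair_comp_left (f : (∀ i, 𝒳 i) → β) (φ : δ → γ) (k : (∀ i, 𝒳 i) → δ) :
    condEnt p f (fun x => (φ (k x), k x)) = condEnt p f k :=
  condEnt_congr_right f fun x x' => by
    simp only [Prod.ext_iff, and_iff_right_iff_imp]
    exact congrArg φ

/-- `I(f ; k | h) := H(f | h) - H(f | h, k)`. -/
noncomputable def condMutualInfo (p : (∀ i, 𝒳 i) → ℝ) (f : (∀ i, 𝒳 i) → β)
    (h : (∀ i, 𝒳 i) → γ) (k : (∀ i, 𝒳 i) → δ) : ℝ :=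
  condEnt p f h - condEnt p f (fun x => (h x, k x))

theorem condMutualInfo_eq_sum (f : (∀ i, 𝒳 i) → β) (h : (∀ i, 𝒳 i) → γ)
    (k : (∀ i, 𝒳 i) → δ) :
    condMutualInfo p f h k = ∑ t : β × γ × δ, dist p (fun x => (f x, h x, k x)) t *
      (log (dist p (fun x => (f x, h x, k x)) t) - log (dist p (fun x => (f x, h x)) (t.1, t.2.1))
        - log (dist p (fun x => (h x, k x)) t.2) + log (dist p h t.2.1)) := by
  rw [sum_dist_mul]
  simp only [condMutualInfo, condEnt, ent_eq_sum, mul_add, mul_sub, sum_add_distrib,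
    sum_sub_distrib]
  ring

theorem sum_dist_mul_dist_div (f : (∀ i, 𝒳 i) → β) (h : (∀ i, 𝒳 i) → γ)
    (k : (∀ i, 𝒳 i) → δ) :
    ∑ t : β × γ × δ, dist p (fun x => (f x, h x)) (t.1, t.2.1)
      * dist p (fun x => (h x, k x)) t.2 / dist p h t.2.1 = ∑ x, p x := by
  simp only [Fintype.sum_prod_type]
  rw [sum_comm, ← sum_dist h]
  refine sum_congr rfl fun c _ => ?_
  simp only [mul_div_assoc, ← mul_sum, ← sum_mul, ← sum_div, sum_dist_pair_left,
    sum_dist_pair_right]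
  rw [← mul_div_assoc, mul_self_div_self]

theorem condMutualInfo_nonneg_and_eq_zero_iff (hp : ∀ x, 0 ≤ p x) (f : (∀ i, 𝒳 i) → β)
    (h : (∀ i, 𝒳 i) → γ) (k : (∀ i, 𝒳 i) → δ) :
    0 ≤ condMutualInfo p f h k ∧ (condMutualInfo p f h k = 0 ↔ CondIndep p f h k) := by
  set J := dist p (fun x => (f x, h x, k x))
  set U := dist p (fun x => (f x, h x))
  set V := dist p (fun x => (h x, k x))
  set M := dist p h
  have hpt : ∀ t : β × γ × δ, J t - U (t.1, t.2.1) * V t.2 / M t.2.1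
      ≤ J t * (log (J t) - log (U (t.1, t.2.1)) - log (V t.2) + log (M t.2.1)) ∧
      (J t - U (t.1, t.2.1) * V t.2 / M t.2.1
        = J t * (log (J t) - log (U (t.1, t.2.1)) - log (V t.2) + log (M t.2.1))
        ↔ J t * M t.2.1 = U (t.1, t.2.1) * V t.2) := fun t =>
    sub_mul_div_le_mul_log (dist_nonneg hp _ _)
      (dist_mono hp fun x hx => by rw [← hx])
      (dist_mono hp fun x hx => congrArg Prod.snd hx)
      (dist_mono hp fun x hx => congrArg Prod.snd hx)
  -- `J - U V / M` is bounded by the summand of `I` pointwise and has total mass `0`.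
  have hzero : ∑ t : β × γ × δ, (J t - U (t.1, t.2.1) * V t.2 / M t.2.1) = 0 := by
    rw [sum_sub_distrib, sum_dist, sum_dist_mul_dist_div, sub_self]
  rw [condMutualInfo_eq_sum, ← hzero]
  refine ⟨sum_le_sum fun t _ => (hpt t).1, ?_⟩
  rw [eq_comm, sum_eq_sum_iff_of_le fun t _ => (hpt t).1]
  simp only [mem_univ, forall_const, (hpt _).2, Prod.forall]
  rfl

theorem condEnt_pair_le (hp : ∀ x, 0 ≤ p x) (f : (∀ i, 𝒳 i) → β) (h : (∀ i, 𝒳 i) → γ)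
    (k : (∀ i, 𝒳 i) → δ) : condEnt p f (fun x => (h x, k x)) ≤ condEnt p f h :=
  sub_nonneg.mp (condMutualInfo_nonneg_and_eq_zero_iff hp f h k).1

theorem condEnt_pair_eq_iff (hp : ∀ x, 0 ≤ p x) (f : (∀ i, 𝒳 i) → β) (h : (∀ i, 𝒳 i) → γ)
    (k : (∀ i, 𝒳 i) → δ) :
    condEnt p f (fun x => (h x, k x)) = condEnt p f h ↔ CondIndep p f h k := by
  rw [eq_comm, ← sub_eq_zero]
  exact (condMutualInfo_nonneg_and_eq_zero_iff hp f h k).2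

theorem condEnt_le_condEnt_comp (hp : ∀ x, 0 ≤ p x) (f : (∀ i, 𝒳 i) → β) (φ : γ → δ)
    (h : (∀ i, 𝒳 i) → γ) : condEnt p f h ≤ condEnt p f (fun x => φ (h x)) :=
  condEnt_pair_comp_left f φ h ▸ condEnt_pair_le hp f _ h

end Entropy

theorem CondIndep.comp_left [Fintype β] {f : (∀ i, 𝒳 i) → β} {h : (∀ i, 𝒳 i) → γ}
    {k : (∀ i, 𝒳 i) → δ} (hfhk : CondIndep p f h k) (φ : β → ε) :
    CondIndep p (fun x => φ (f x)) h k := by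
  intro a' c d
  rw [dist_map_fst φ f (fun x => (h x, k x)), dist_map_fst φ f h, sum_mul, sum_mul]
  refine sum_congr rfl fun a _ => ?_
  split_ifs
  · exact hfhk a c d
  · simp

theorem condIndep_dist_iff {𝒴 : Fin N → Type*} [∀ i, Fintype (𝒴 i)]
    (F : (∀ i, 𝒳 i) → ∀ i, 𝒴 i) {f : (∀ i, 𝒴 i) → β} {h : (∀ i, 𝒴 i) → γ}
    {k : (∀ i, 𝒴 i) → δ} :
    CondIndep (dist p F) f h k
      ↔ CondIndep p (fun x => f (F x)) (fun x => h (F x)) (fun x => k (F x)) := by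
  simp only [CondIndep, dist_dist]

theorem condIndep_restr_iff (i : Fin N) {A : Finset (Fin N)} (hA : A ⊆ univ.erase i) :
    CondIndep p (fun x => x i) (restr A) (restr (univ.erase i))
      ↔ ∀ x, p x * margin p A x = margin p (univ.erase i) x * margin p (insert i A) x := by
  set E := univ.erase i
  have hJ : ∀ x, dist p (fun x => (x i, restr A x, restr E x)) (x i, restr A x, restr E x)
      = p x := by
    refine dist_apply_of_injective fun x x' hxx => funext fun j => ?_
    simp only [Prod.mk.injEq] at hxx
    obtain ⟨hi, -, hE⟩ := hxx
    by_cases hj : j = i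
    · subst hj
      exact hi
    · exact restr_eq_restr_iff.mp hE j (mem_erase.mpr ⟨hj, mem_univ j⟩)
  have hU : ∀ x, dist p (fun x => (x i, restr A x)) (x i, restr A x)
      = margin p (insert i A) x := fun x =>
    dist_congr fun x' => by
      rw [Prod.mk.injEq, restr_eq_restr_iff, restr_eq_restr_iff, forall_mem_insert]
  have hV : ∀ x, dist p (fun x => (restr A x, restr E x)) (restr A x, restr E x)
      = margin p E x := fun x =>
    dist_congr fun x' => by
      rw [Prod.mk.injEq, restr_eq_restr_iff, restr_eq_restr_iff]
      exact and_iff_right_of_imp fun h j hj => h j (hA hj)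
  constructor
  · intro h x
    have := h (x i) (restr A x) (restr E x)
    rw [hJ, hU, hV] at this
    rw [mul_comm (margin p E x), ← this]
    rfl
  · intro h a c d
    by_cases hex : ∃ x, restr A x = c ∧ restr E x = d
    · obtain ⟨x, rfl, rfl⟩ := hex
      have hA' : i ∉ A := fun hi => (mem_erase.mp (hA hi)).1 rfl
      rw [← Function.update_self i a x, ← restr_update_of_notMem hA' x a,
        ← restr_update_of_notMem (notMem_erase i univ) x a, hJ, hU, hV, mul_comm _ (margin _ _ _)]
      exact h _
    · have hJ0 : dist p (fun x => (x i, restr A x, restr E x)) (a, c, d) = 0 :=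
        dist_eq_zero_of_forall_ne fun x hx => hex ⟨x, Prod.ext_iff.mp (Prod.ext_iff.mp hx).2⟩
      have hV0 : dist p (fun x => (restr A x, restr E x)) (c, d) = 0 :=
        dist_eq_zero_of_forall_ne fun x hx => hex ⟨x, Prod.ext_iff.mp hx⟩
      rw [hJ0, hV0, zero_mul, mul_zero]

theorem isMRF_iff_condIndep (G : SimpleGraph (Fin N)) (p : (∀ i, 𝒳 i) → ℝ) :
    IsMRF G p ↔ ∀ i, CondIndep p (fun x => x i) (restr (nbr G i)) (restr (univ.erase i)) :=
  forall_congr' fun i => (condIndep_restr_iff i (nbr_subset_erase G i)).symm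

end DiscreteLaw

open DiscreteLaw in
theorem lumpable_of_condEnt_eq_general {𝒳 𝒴 : Fin N → Type*}
    [∀ i, Fintype (𝒳 i)] [∀ i, Fintype (𝒴 i)]
    (G : SimpleGraph (Fin N)) (p : (∀ i, 𝒳 i) → ℝ)
    (hnn : ∀ x, 0 ≤ p x)
    (hMRF : IsMRF G p)
    (g : ∀ i, 𝒳 i → 𝒴 i)
    (hIT : ∀ i : Fin N,
      condEnt p (fun x => g i (x i)) (fun x => restr (nbr G i) (gmap g x))
        = condEnt p (fun x => g i (x i)) (restr (nbr G i))) :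
    IsMRF G (dist p (gmap g)) := by
  rw [isMRF_iff_condIndep] at hMRF ⊢
  intro i
  rw [condIndep_dist_iff]
  have hYX := hIT i
  have hXi := (hMRF i).comp_left (g i)
  have hAE := nbr_subset_erase G i
  set A := nbr G i
  set E := Finset.univ.erase i
  set Yi : (∀ j, 𝒳 j) → 𝒴 i := fun x => g i (x i)
  change CondIndep p Yi (fun x => restr A (gmap g x)) (fun x => restr E (gmap g x))
  refine (condEnt_pair_eq_iff hnn _ _ _).1 (le_antisymm (condEnt_pair_le hnn _ _ _) ?_)
  calc condEnt p Yi (fun x => restr A (gmap g x))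
      = condEnt p Yi (fun x => (restr A x, restr E x)) := by
        rw [hYX, (condEnt_pair_eq_iff hnn _ _ _).2 hXi]
    _ = condEnt p Yi (restr E) := condEnt_pair_comp_left Yi (Finset.restrict₂ hAE) (restr E)
    _ ≤ condEnt p Yi (fun x => restr E (gmap g x)) :=
        condEnt_le_condEnt_comp hnn Yi (fun (c : ∀ j : E, 𝒳 j) (j : E) => g j (c j)) (restr E)
    _ = _ := (condEnt_pair_comp_left Yi (Finset.restrict₂ hAE) _).symm

/-- **Proposition 2.** If `X` is a MRF on `𝒢` and for every vertex
`i` one has `H(Y_i | Y_{N_i}) = H(Y_i | X_{N_i})`, then `Y = (g_i(X_i), i ∈ V)`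
is a MRF on `𝒢`. -/
theorem lumpable_of_condEnt_eq {𝒳 𝒴 : Fin N → Type*}
    [∀ i, Fintype (𝒳 i)] [∀ i, Fintype (𝒴 i)]
    (G : SimpleGraph (Fin N)) (p : (∀ i, 𝒳 i) → ℝ)
    (hnn : ∀ x, 0 ≤ p x) (hsum : ∑ x : ∀ i, 𝒳 i, p x = 1)
    (hMRF : IsMRF G p)
    (g : ∀ i, 𝒳 i → 𝒴 i)
    (hIT : ∀ i : Fin N,
      condEnt p (fun x => g i (x i)) (fun x => restr (nbr G i) (gmap g x))
        = condEnt p (fun x => g i (x i)) (restr (nbr G i))) :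
    IsMRF G (dist p (gmap g)) :=
  lumpable_of_condEnt_eq_general G p hnn hMRF g hIT
end

section
/- Let X be a Markov random field on 𝒢=(V,E) (with PMF p_X not necessarily strictly positive) and let Y_i=g_i(X_i). If the lumping is information-preserving, i.e., H(Y)=H(X), then for every vertex i∈V, H(X_i | Y_i, X_{N_i}) = 0. -/
open scoped Classical

/-!
Basic framework: tuples of finitely-valued random variables indexed by the
vertex set `Fin N`, joint PMFs as real-valued functions, pushforward
distributions, Shannon entropy, conditional entropy, marginals, and Markov
random fields on simple graphs.
-/

variable {N : ℕ}

/-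
Information preservation means that `g` is injective on the support of `p`. For a Markov random
field the support is closed under swapping a single coordinate: if `x` and `x'` lie in the
support and agree on `N_i`, then so does `z`, the point `x` with `x_i` replaced by `x'_i`,
because the MRF identity at `z` reads `p(z) p(z_{N_i}) = p(x_{V∖{i}}) p(x'_{{i} ∪ N_i}) > 0`.
If also `g_i(x_i) = g_i(x'_i)`, then `g(z) = g(x)`, hence `z = x` and `x_i = x'_i`.
-/

namespace Real

variable {ι : Type*} [Fintype ι] {q : ι → ℝ}

theorem sum_negMulLog_sub_negMulLog_sum (q : ι → ℝ) :
    ∑ b, negMulLog (q b) - negMulLog (∑ b, q b)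
      = ∑ b, q b * (log (∑ b', q b') - log (q b)) := by
  simp only [negMulLog, mul_sub, Finset.sum_sub_distrib, neg_mul, Finset.sum_neg_distrib,
    ← Finset.sum_mul]
  ring

theorem mul_log_sum_sub_log_nonneg (hq : ∀ b, 0 ≤ q b) (b : ι) :
    0 ≤ q b * (log (∑ b', q b') - log (q b)) := by
  rcases (hq b).eq_or_lt with hb | hb
  · simp [← hb]
  · exact mul_nonneg hb.le <| sub_nonneg.2 <|
      log_le_log hb (Finset.single_le_sum (fun b' _ => hq b') (Finset.mem_univ b))

theorem mul_log_sum_sub_log_eq_zero_iff (hq : ∀ b, 0 ≤ q b) (b : ι) :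
    q b * (log (∑ b', q b') - log (q b)) = 0 ↔ (0 < q b → q b = ∑ b', q b') := by
  have hle : q b ≤ ∑ b', q b' := Finset.single_le_sum (fun b' _ => hq b') (Finset.mem_univ b)
  rcases (hq b).eq_or_lt with hb | hb
  · simp [← hb]
  · rw [mul_eq_zero, sub_eq_zero, or_iff_right hb.ne']
    exact ⟨fun h _ => (log_injOn_pos (hb.trans_le hle) hb h).symm,
      fun h => (congrArg log (h hb)).symm⟩

theorem negMulLog_sum_le_sum_negMulLog (hq : ∀ b, 0 ≤ q b) :
    negMulLog (∑ b, q b) ≤ ∑ b, negMulLog (q b) := by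
  rw [← sub_nonneg, sum_negMulLog_sub_negMulLog_sum]
  exact Finset.sum_nonneg fun b _ => mul_log_sum_sub_log_nonneg hq b

theorem sum_negMulLog_eq_negMulLog_sum_iff (hq : ∀ b, 0 ≤ q b) :
    ∑ b, negMulLog (q b) = negMulLog (∑ b, q b) ↔ {b | 0 < q b}.Subsingleton := by
  rw [← sub_eq_zero, sum_negMulLog_sub_negMulLog_sum,
    Finset.sum_eq_zero_iff_of_nonneg fun b _ => mul_log_sum_sub_log_nonneg hq b]
  simp only [Finset.mem_univ, true_implies, mul_log_sum_sub_log_eq_zero_iff hq]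
  constructor
  · intro h b hb b' hb'
    by_contra hne
    have := Finset.sum_le_sum_of_subset_of_nonneg (Finset.subset_univ {b, b'})
      fun c _ _ => hq c
    rw [Finset.sum_pair hne, ← h b hb] at this
    exact (lt_add_of_pos_right _ (show 0 < q b' from hb')).not_ge this
  · intro h b hb
    refine (Finset.sum_eq_single b (fun c _ hc => ?_) (by simp)).symm
    exact ((hq c).eq_or_lt.resolve_right fun hc' => hc (h hc' hb)).symm

end Real

section Dist

variable {𝒳 : Fin N → Type*} [∀ i, Fintype (𝒳 i)] {β γ : Type*} {p : (∀ i, 𝒳 i) → ℝ}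

theorem dist_apply_nonneg (hp : ∀ x, 0 ≤ p x) (f : (∀ i, 𝒳 i) → β) (b : β) :
    0 ≤ _root_.dist p f b :=
  Finset.sum_nonneg fun x _ => ite_nonneg (hp x) le_rfl

theorem le_dist_apply_self (hp : ∀ x, 0 ≤ p x) (f : (∀ i, 𝒳 i) → β) (x : ∀ i, 𝒳 i) :
    p x ≤ _root_.dist p f (f x) := by
  simpa [_root_.dist] using Finset.single_le_sum (f := fun z => if f z = f x then p z else 0)
    (fun z _ => ite_nonneg (hp z) le_rfl) (Finset.mem_univ x)

theorem dist_apply_pos_iff (hp : ∀ x, 0 ≤ p x) (f : (∀ i, 𝒳 i) → β) (b : β) :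
    0 < _root_.dist p f b ↔ ∃ x, f x = b ∧ 0 < p x := by
  refine ⟨fun h => ?_, fun ⟨x, hx, hpx⟩ => hx ▸ hpx.trans_le (le_dist_apply_self hp f x)⟩
  by_contra! hc
  exact h.not_ge <| Finset.sum_nonpos fun x _ => by
    split_ifs with hx
    exacts [hc x hx, le_rfl]

theorem sum_dist_pair_eq_dist_snd [Fintype β] (f : (∀ i, 𝒳 i) → β) (h : (∀ i, 𝒳 i) → γ)
    (c : γ) : ∑ b, _root_.dist p (fun x => (f x, h x)) (b, c) = _root_.dist p h c := by
  unfold _root_.dist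
  rw [Finset.sum_comm]
  refine Finset.sum_congr rfl fun x _ => ?_
  simp [Prod.ext_iff, ite_and]

theorem ent_comp_of_injective [Fintype β] [Fintype γ] {e : β → γ} (he : e.Injective)
    (f : (∀ i, 𝒳 i) → β) : ent p (e ∘ f) = ent p f := by
  refine (Fintype.sum_of_injective e he _ _ (fun c hc => ?_) fun b => ?_).symm
  · have : _root_.dist p (e ∘ f) c = 0 :=
      Finset.sum_eq_zero fun x _ => if_neg fun h => hc ⟨f x, h⟩
    rw [this, Real.negMulLog_zero]
  · simp only [_root_.dist, Function.comp, he.eq_iff]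

theorem condEnt_eq_sum [Fintype β] [Fintype γ] (f : (∀ i, 𝒳 i) → β) (h : (∀ i, 𝒳 i) → γ) :
    condEnt p f h = ∑ c, (∑ b, Real.negMulLog (_root_.dist p (fun x => (f x, h x)) (b, c))
      - Real.negMulLog (∑ b, _root_.dist p (fun x => (f x, h x)) (b, c))) := by
  simp only [condEnt, ent, Fintype.sum_prod_type_right, Finset.sum_sub_distrib,
    sum_dist_pair_eq_dist_snd]

theorem condEnt_eq_zero_iff [Fintype β] [Fintype γ] (hp : ∀ x, 0 ≤ p x)
    (f : (∀ i, 𝒳 i) → β) (h : (∀ i, 𝒳 i) → γ) :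
    condEnt p f h = 0 ↔ ∀ x x', 0 < p x → 0 < p x' → h x = h x' → f x = f x' := by
  have hq := dist_apply_nonneg hp (fun x => (f x, h x))
  rw [condEnt_eq_sum, Finset.sum_eq_zero_iff_of_nonneg fun c _ =>
    sub_nonneg.2 (Real.negMulLog_sum_le_sum_negMulLog fun b => hq (b, c))]
  simp only [Finset.mem_univ, true_implies, sub_eq_zero,
    Real.sum_negMulLog_eq_negMulLog_sum_iff fun b => hq (b, _), Set.Subsingleton,
    Set.mem_ofPred_eq, dist_apply_pos_iff hp, Prod.ext_iff]
  constructor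
  · intro H x x' hx hx' hxx'
    exact H (h x) ⟨x, ⟨rfl, rfl⟩, hx⟩ ⟨x', ⟨rfl, hxx'.symm⟩, hx'⟩
  · rintro H c _ ⟨x, ⟨rfl, rfl⟩, hx⟩ _ ⟨x', ⟨rfl, hxx'⟩, hx'⟩
    exact H x x' hx hx' hxx'.symm

theorem ent_eq_ent_id_iff_injOn [Fintype γ] (hp : ∀ x, 0 ≤ p x) (k : (∀ i, 𝒳 i) → γ) :
    ent p k = ent p id ↔ Set.InjOn k {x | 0 < p x} := by
  have hpair : ent p (fun x => (x, k x)) = ent p id :=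
    ent_comp_of_injective (e := fun x => (x, k x)) (fun _ _ h => congrArg Prod.fst h) id
  have hcond : condEnt p id k = ent p id - ent p k := by rw [condEnt, ← hpair]; rfl
  rw [eq_comm, ← sub_eq_zero, ← hcond, condEnt_eq_zero_iff hp]
  exact ⟨fun H x hx x' hx' => H x x' hx hx', fun H x x' hx hx' => H hx hx'⟩

theorem le_margin (hp : ∀ x, 0 ≤ p x) (A : Finset (Fin N)) (x : ∀ i, 𝒳 i) :
    p x ≤ margin p A x :=
  le_dist_apply_self hp (restr A) x

theorem margin_congr (A : Finset (Fin N)) {x y : ∀ i, 𝒳 i} (hxy : ∀ j ∈ A, x j = y j) :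
    margin p A x = margin p A y :=
  congrArg (_root_.dist p (restr A)) (funext fun j : A => hxy j.1 j.2)

end Dist

theorem self_notMem_nbr (G : SimpleGraph (Fin N)) (i : Fin N) : i ∉ nbr G i := by
  simp [nbr]

theorem gmap_update_of_eq {𝒳 𝒴 : Fin N → Type*} (g : ∀ i, 𝒳 i → 𝒴 i) {x : ∀ i, 𝒳 i}
    {i : Fin N} {a : 𝒳 i} (ha : g i a = g i (x i)) :
    gmap g (Function.update x i a) = gmap g x := by
  funext j
  rcases eq_or_ne j i with rfl | hj
  · simp [gmap, ha]
  · simp [gmap, hj]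

theorem IsMRF.update_pos {𝒳 : Fin N → Type*} [∀ i, Fintype (𝒳 i)] {G : SimpleGraph (Fin N)}
    {p : (∀ i, 𝒳 i) → ℝ} (hMRF : IsMRF G p) (hp : ∀ x, 0 ≤ p x) {i : Fin N}
    {x x' : ∀ i, 𝒳 i} (hx : 0 < p x) (hx' : 0 < p x') (hxx' : ∀ j ∈ nbr G i, x j = x' j) :
    0 < p (Function.update x i (x' i)) := by
  set z := Function.update x i (x' i)
  have hzx : ∀ j ≠ i, z j = x j := fun j hj => Function.update_of_ne hj _ _
  have hnbr : ∀ j ∈ nbr G i, j ≠ i := fun j hj => ne_of_mem_of_not_mem hj (self_notMem_nbr G i)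
  have hN : margin p (nbr G i) z = margin p (nbr G i) x :=
    margin_congr _ fun j hj => hzx j (hnbr j hj)
  have hV : margin p (Finset.univ.erase i) z = margin p (Finset.univ.erase i) x :=
    margin_congr _ fun j hj => hzx j (Finset.ne_of_mem_erase hj)
  have hiN : margin p (insert i (nbr G i)) z = margin p (insert i (nbr G i)) x' := by
    refine margin_congr _ fun j hj => ?_
    rcases Finset.mem_insert.1 hj with rfl | hj
    · exact Function.update_self _ _ _
    · rw [hzx j (hnbr j hj), hxx' j hj]
  have hprod : 0 < p z * margin p (nbr G i) z := by
    rw [hMRF i z, hV, hiN]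
    exact mul_pos (hx.trans_le (le_margin hp _ x)) (hx'.trans_le (le_margin hp _ x'))
  exact pos_of_mul_pos_left hprod (dist_apply_nonneg hp _ _)

theorem necessary_infoPreservation_general {𝒳 𝒴 : Fin N → Type*}
    [∀ i, Fintype (𝒳 i)] [∀ i, Fintype (𝒴 i)]
    (G : SimpleGraph (Fin N)) (p : (∀ i, 𝒳 i) → ℝ)
    (hnn : ∀ x, 0 ≤ p x)
    (hMRF : IsMRF G p)
    (g : ∀ i, 𝒳 i → 𝒴 i)
    (hinfo : ent p (gmap g) = ent p id) :
    ∀ i : Fin N,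
      condEnt p (fun x => x i) (fun x => (g i (x i), restr (nbr G i) x)) = 0 := by
  have hinj := (ent_eq_ent_id_iff_injOn hnn (gmap g)).1 hinfo
  intro i
  refine (condEnt_eq_zero_iff hnn _ _).2 fun x x' hx hx' hxx' => ?_
  obtain ⟨hgi, hres⟩ := Prod.ext_iff.1 hxx'
  have hswap := hMRF.update_pos hnn hx hx' fun j hj => congrFun hres ⟨j, hj⟩
  have hx_eq : Function.update x i (x' i) = x := hinj hswap hx (gmap_update_of_eq g hgi.symm)
  simpa using (congrFun hx_eq i).symm

/-- **Proposition 4, necessity.** If `X` is a MRF on `𝒢` (PMF not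
necessarily strictly positive) and the lumping is information-preserving, i.e.
`H(Y) = H(X)`, then `H(X_i | Y_i, X_{N_i}) = 0` for every vertex `i`. -/
theorem necessary_infoPreservation {𝒳 𝒴 : Fin N → Type*}
    [∀ i, Fintype (𝒳 i)] [∀ i, Fintype (𝒴 i)]
    (G : SimpleGraph (Fin N)) (p : (∀ i, 𝒳 i) → ℝ)
    (hnn : ∀ x, 0 ≤ p x) (hsum : ∑ x : ∀ i, 𝒳 i, p x = 1)
    (hMRF : IsMRF G p)
    (g : ∀ i, 𝒳 i → 𝒴 i)
    (hinfo : ent p (gmap g) = ent p id) :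
    ∀ i : Fin N,
      condEnt p (fun x => x i) (fun x => (g i (x i), restr (nbr G i) x)) = 0 :=
  necessary_infoPreservation_general G p hnn hMRF g hinfo
end
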